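/- arXiv:1504.00389 — 4 statements merged into one kernel-verified Lean document; each statement's English description precedes it below -/
import Mathlib

section
/- For every f : ℕ → ℕ, all k, n, ℓ ∈ ℕ, one has binom(k,n)_f = ∑_{i=0}^{k} f(ℓ)^i · C(k,i) · binom(k−i, n−ℓ·i)_g, where C(k,i) is the ordinary binomial coefficient, g : ℕ → ℕ is defined by g(s) = f(s) for s ≠ ℓ and g(ℓ) = 0, and terms with ℓ·i > n are zero. -/
/-- The extended binomial coefficient `binom(k,n)_f`: the sum, over all
`k`-tuples `(π₁,…,π_k)` of nonnegative integers with `π₁ + ⋯ + π_k = n`,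
of the products `f(π₁)⋯f(π_k)`. It counts the `f`-weighted integer
compositions of `n` with exactly `k` parts. -/
def extBinom (f : ℕ → ℕ) (k n : ℕ) : ℕ :=
  ∑ π ∈ Finset.Nat.antidiagonalTuple k n, ∏ i, f (π i)

/-!
`binom(k,n)_f` is the `n`-th coefficient of `F ^ k`, where `F = ∑ f(s) X^s`. Splitting off the
monomial of degree `ℓ` gives `F = f(ℓ) X^ℓ + G` with `G` the series of `g = update f ℓ 0`, and the
binomial theorem for `(f(ℓ) X^ℓ + G) ^ k` is the identity, coefficientwise.
-/

namespace PowerSeries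

open Finset

variable {R : Type*} [CommSemiring R]

theorem coeff_pow_eq_sum_antidiagonalTuple (φ : R⟦X⟧) (k n : ℕ) :
    coeff n (φ ^ k) = ∑ π ∈ Nat.antidiagonalTuple k n, ∏ i, coeff (π i) φ := by
  rw [← Fin.prod_const, coeff_prod, ← piAntidiag_univ_fin_eq_antidiagonalTuple, finsuppAntidiag,
    sum_map]
  exact sum_attach (piAntidiag univ n) fun π => ∏ i, coeff (π i) φ

theorem coeff_C_mul_X_pow_add_pow (a : R) (ℓ : ℕ) (φ : R⟦X⟧) (k n : ℕ) :
    coeff n ((C a * X ^ ℓ + φ) ^ k) =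
      ∑ i ∈ range (k + 1),
        if ℓ * i ≤ n then a ^ i * k.choose i * coeff (n - ℓ * i) (φ ^ (k - i)) else 0 := by
  rw [add_pow, map_sum]
  refine sum_congr rfl fun i _ => ?_
  have hterm : (C a * X ^ ℓ) ^ i * φ ^ (k - i) * (k.choose i : R⟦X⟧) =
      C (a ^ i * k.choose i) * (X ^ (ℓ * i) * φ ^ (k - i)) := by
    rw [map_mul, map_pow, map_natCast, pow_mul]
    ring
  rw [hterm, coeff_C_mul, coeff_X_pow_mul', mul_ite, mul_zero]

theorem mk_eq_C_mul_X_pow_add_mk_update (f : ℕ → R) (ℓ : ℕ) :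
    mk f = C (f ℓ) * X ^ ℓ + mk (Function.update f ℓ 0) := by
  ext s
  rw [map_add, coeff_C_mul_X_pow, coeff_mk, coeff_mk, Function.update_apply]
  split_ifs with hs
  · simp [hs]
  · simp

end PowerSeries

open PowerSeries

theorem extBinom_eq_coeff_pow (f : ℕ → ℕ) (k n : ℕ) : extBinom f k n = coeff n (mk f ^ k) := by
  simp only [coeff_pow_eq_sum_antidiagonalTuple, coeff_mk, extBinom]

theorem extBinom_remove_part_size (f : ℕ → ℕ) (k n ℓ : ℕ) :
    extBinom f k n =
      ∑ i ∈ Finset.range (k + 1),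
        if ℓ * i ≤ n then
          f ℓ ^ i * k.choose i * extBinom (Function.update f ℓ 0) (k - i) (n - ℓ * i)
        else 0 := by
  rw [extBinom_eq_coeff_pow, mk_eq_C_mul_X_pow_add_mk_update f ℓ, coeff_C_mul_X_pow_add_pow]
  simp only [extBinom_eq_coeff_pow, Nat.cast_id]
end

section
/- Let p be a prime and f : ℕ → ℕ. For all m, r ∈ ℕ with r < p, one has binom(p+1, m·p + r)_f ≡ ∑_{s=0}^{m} f(r + s·p) · f(m − s) (mod p). -/
open PowerSeries Finset

theorem extBinom_cast_eq_coeff_pow {R : Type*} [CommSemiring R] (f : ℕ → ℕ) (k n : ℕ) :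
    (extBinom f k n : R) = coeff n (mk (fun i ↦ (f i : R)) ^ k) := by
  have h := coeff_prod (fun _ : Fin k ↦ mk fun i ↦ (f i : R)) n univ
  rw [prod_const, card_univ, Fintype.card_fin] at h
  rw [h, extBinom, Nat.cast_sum, ← piAntidiag_univ_fin_eq_antidiagonalTuple, ← sum_attach,
    finsuppAntidiag, sum_map]
  simp [coeff_mk]

theorem PowerSeries.coeff_pow_expChar {R : Type*} [CommRing R] (p : ℕ) [ExpChar R p]
    (φ : R⟦X⟧) (n : ℕ) :
    coeff n (φ ^ p) = if p ∣ n then coeff (n / p) φ ^ p else 0 := by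
  have hp : p ≠ 0 := expChar_ne_zero R p
  rw [← MvPowerSeries.map_frobenius_expand p hp]
  change coeff n (map (frobenius R p) (expand p hp φ)) = _
  rw [coeff_map, coeff_expand, apply_ite (frobenius R p), map_zero, frobenius_def]

theorem Finset.sum_antidiagonal_mul_ite_dvd {R : Type*} [NonUnitalNonAssocSemiring R]
    (a b : ℕ → R) {p r : ℕ} (hr : r < p) (m : ℕ) :
    ∑ ij ∈ antidiagonal (m * p + r), a ij.1 * (if p ∣ ij.2 then b (ij.2 / p) else 0) =
      ∑ s ∈ range (m + 1), a (r + s * p) * b (m - s) := by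
  have hp : 0 < p := by omega
  have sub_mul_add {t : ℕ} (ht : t ≤ m) : (m - t) * p + t * p = m * p := by
    rw [← Nat.add_mul, Nat.sub_add_cancel ht]
  have mem_filter_iff {i j : ℕ} : (i, j) ∈ (antidiagonal (m * p + r)).filter (p ∣ ·.2) ↔
      ∃ t ≤ m, i = r + (m - t) * p ∧ j = t * p := by
    simp only [mem_filter, HasAntidiagonal.mem_antidiagonal]
    constructor
    · rintro ⟨hij, t, rfl⟩
      have ht : t ≤ m := by
        by_contra! h
        nlinarith
      have := sub_mul_add ht
      exact ⟨t, ht, by rw [mul_comm p t] at hij; omega, mul_comm p t⟩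
    · rintro ⟨t, ht, rfl, rfl⟩
      have := sub_mul_add ht
      exact ⟨by omega, dvd_mul_left p t⟩
  simp_rw [mul_ite, mul_zero]
  rw [← sum_filter, ← sum_range_reflect]
  refine sum_nbij' (fun ij ↦ ij.2 / p) (fun t ↦ (r + (m - t) * p, t * p)) ?_ ?_ ?_ ?_ ?_
  · rintro ⟨i, j⟩ hij
    obtain ⟨t, ht, rfl, rfl⟩ := mem_filter_iff.mp hij
    simp only [Nat.mul_div_cancel t hp, mem_range]
    omega
  · intro t ht
    exact mem_filter_iff.mpr ⟨t, by simpa [Nat.lt_succ_iff] using ht, rfl, rfl⟩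
  · rintro ⟨i, j⟩ hij
    obtain ⟨t, ht, rfl, rfl⟩ := mem_filter_iff.mp hij
    simp [Nat.mul_div_cancel t hp]
  · intro t _
    simp [Nat.mul_div_cancel t hp]
  · rintro ⟨i, j⟩ hij
    obtain ⟨t, ht, rfl, rfl⟩ := mem_filter_iff.mp hij
    simp [Nat.mul_div_cancel t hp, Nat.sub_sub_self ht]

theorem extBinom_prime_succ_row (p : ℕ) (hp : p.Prime) (f : ℕ → ℕ)
    (m r : ℕ) (hr : r < p) :
    extBinom f (p + 1) (m * p + r) ≡
      ∑ s ∈ Finset.range (m + 1), f (r + s * p) * f (m - s) [MOD p] := by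
  have : Fact p.Prime := ⟨hp⟩
  rw [← ZMod.natCast_eq_natCast_iff, extBinom_cast_eq_coeff_pow, pow_succ', coeff_mul]
  simp only [coeff_pow_expChar, ZMod.pow_card, coeff_mk]
  rw [sum_antidiagonal_mul_ite_dvd (fun i ↦ (f i : ZMod p)) (fun i ↦ (f i : ZMod p)) hr]
  simp
end

section
/- Let p be a prime, f : ℕ → ℕ, and s, r nonnegative integers such that p does not divide r. Define g : ℕ → ℕ by g(a) = binom(p, a·p)_f. Then binom(s·p, r)_f ≡ s · ∑ binom(p, i)_f · binom(s−1, (r−i)/p)_g (mod p²), where the sum is over all i with 0 ≤ i ≤ r such that p divides r − i. -/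
open PowerSeries

theorem PowerSeries.coeff_pow_eq_sum_antidiagonalTuple_s11 {R : Type*} [CommSemiring R]
    (φ : R⟦X⟧) (k n : ℕ) :
    coeff n (φ ^ k) = ∑ t ∈ Finset.Nat.antidiagonalTuple k n, ∏ i, coeff (t i) φ := by
  classical
  rw [← Fin.prod_const, coeff_prod]
  exact Finset.sum_equiv Finsupp.equivFunOnFinite
    (by simp [Finset.Nat.mem_antidiagonalTuple, Finset.mem_finsuppAntidiag]) (fun _ _ => rfl)

theorem PowerSeries.coeff_pow_char_of_not_dvd {R : Type*} [CommRing R] {p : ℕ} [ExpChar R p]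
    (φ : R⟦X⟧) {n : ℕ} (hn : ¬ p ∣ n) : coeff n (φ ^ p) = 0 := by
  rw [← MvPowerSeries.map_frobenius_expand p (expChar_ne_zero R p)]
  change frobenius R p (coeff n (expand p (expChar_ne_zero R p) φ)) = 0
  rw [coeff_expand_of_not_dvd _ _ _ hn, map_zero]

theorem PowerSeries.mul_self_eq_zero_of_dvd_coeff {R : Type*} [CommSemiring R] {a : R}
    (ha : a * a = 0) {φ : R⟦X⟧} (h : ∀ n, a ∣ coeff n φ) : φ * φ = 0 := by
  choose ψ hψ using h
  have hφ : φ = C a * mk ψ := by ext n; rw [coeff_C_mul, coeff_mk, hψ]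
  rw [hφ, mul_mul_mul_comm, ← map_mul, ha, map_zero, zero_mul]

theorem add_pow_of_mul_self_eq_zero {R : Type*} [CommSemiring R] {e : R} (he : e * e = 0)
    (g : R) (s : ℕ) : (g + e) ^ s = g ^ s + s * g ^ (s - 1) * e := by
  induction s with
  | zero => simp
  | succ s ih =>
    rw [pow_succ, ih]
    rcases s with _ | s
    · simp
    · simp only [Nat.add_sub_cancel, Nat.cast_succ]
      calc _ = g ^ (s + 2) + (s + 1 + 1) * g ^ (s + 1) * e + (s + 1) * g ^ s * (e * e) := by ring
        _ = _ := by rw [he, mul_zero, add_zero]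

theorem natCast_extBinom (R : Type*) [CommSemiring R] (f : ℕ → ℕ) (k n : ℕ) :
    (extBinom f k n : R) = coeff n ((mk fun i => (f i : R)) ^ k) := by
  simp [extBinom, coeff_pow_eq_sum_antidiagonalTuple_s11]

theorem Nat.Prime.dvd_extBinom {p : ℕ} (hp : p.Prime) (f : ℕ → ℕ) {n : ℕ} (hn : ¬ p ∣ n) :
    p ∣ extBinom f p n := by
  have := Fact.mk hp
  rw [← ZMod.natCast_eq_zero_iff, natCast_extBinom, coeff_pow_char_of_not_dvd _ hn]

theorem coeff_expand_pow {R : Type*} [CommRing R] (g : ℕ → ℕ) {p : ℕ} (hp : p ≠ 0) (k n : ℕ) :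
    coeff n (expand p hp (mk fun a => (g a : R)) ^ k) =
      if p ∣ n then (extBinom g k (n / p) : R) else 0 := by
  rw [← map_pow, coeff_expand, natCast_extBinom]

section DivisiblePart

variable {R : Type*} [CommRing R] (f : ℕ → ℕ) {p : ℕ} (hp : p ≠ 0)

/-- `∑ₐ binom(p, a p)_f X^{a p}`: the terms of `(∑ₙ f(n) Xⁿ)^p` with exponent divisible by `p`. -/
noncomputable def divisiblePart : R⟦X⟧ :=
  expand p hp (mk fun a => (extBinom f p (a * p) : R))

theorem coeff_pow_sub_divisiblePart (n : ℕ) :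
    coeff n ((mk fun i => (f i : R)) ^ p - divisiblePart f hp) =
      if p ∣ n then 0 else (extBinom f p n : R) := by
  rw [map_sub, ← natCast_extBinom, divisiblePart, coeff_expand, coeff_mk]
  split_ifs with h
  · rw [Nat.div_mul_cancel h, sub_self]
  · rw [sub_zero]

theorem coeff_divisiblePart_pow (k n : ℕ) :
    coeff n (divisiblePart f hp ^ k) =
      if p ∣ n then (extBinom (fun a => extBinom f p (a * p)) k (n / p) : R) else 0 :=
  coeff_expand_pow _ hp k n

theorem coeff_divisiblePart_pow_mul {r : ℕ} (hr : ¬ p ∣ r) (k : ℕ) :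
    coeff r (divisiblePart f hp ^ k * ((mk fun i => (f i : R)) ^ p - divisiblePart f hp)) =
      ∑ i ∈ (Finset.range (r + 1)).filter (fun i => p ∣ (r - i)),
        (extBinom f p i * extBinom (fun a => extBinom f p (a * p)) k ((r - i) / p) : R) := by
  rw [mul_comm, coeff_mul, Finset.Nat.sum_antidiagonal_eq_sum_range_succ_mk, Finset.sum_filter]
  refine Finset.sum_congr rfl fun i hi => ?_
  rw [coeff_pow_sub_divisiblePart, coeff_divisiblePart_pow]
  split_ifs with hpi hpri hpri
  · exact absurd (Nat.add_sub_of_le (Finset.mem_range_succ_iff.1 hi) ▸ dvd_add hpi hpri) hr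
  all_goals simp

end DivisiblePart

theorem extBinom_babbage_nondiv (p : ℕ) (hp : p.Prime) (f : ℕ → ℕ)
    (s r : ℕ) (hr : ¬ p ∣ r) :
    extBinom f (s * p) r ≡
      s * ∑ i ∈ (Finset.range (r + 1)).filter (fun i => p ∣ (r - i)),
        extBinom f p i *
          extBinom (fun a => extBinom f p (a * p)) (s - 1) ((r - i) / p)
      [MOD p ^ 2] := by
  rw [← ZMod.natCast_eq_natCast_iff]
  set F : (ZMod (p ^ 2))⟦X⟧ := mk fun i => (f i : ZMod (p ^ 2))
  set G : (ZMod (p ^ 2))⟦X⟧ := divisiblePart f hp.ne_zero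
  have hE : (F ^ p - G) * (F ^ p - G) = 0 := by
    refine mul_self_eq_zero_of_dvd_coeff (a := (p : ZMod (p ^ 2))) ?_ fun n => ?_
    · rw [← Nat.cast_mul, ← sq, ZMod.natCast_self]
    · rw [coeff_pow_sub_divisiblePart]
      split_ifs with hn
      · exact dvd_zero _
      · exact Nat.cast_dvd_cast (hp.dvd_extBinom f hn)
  calc (extBinom f (s * p) r : ZMod (p ^ 2))
      = coeff r ((G + (F ^ p - G)) ^ s) := by
        rw [natCast_extBinom, add_sub_cancel, mul_comm, pow_mul]
    _ = s * coeff r (G ^ (s - 1) * (F ^ p - G)) := by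
        rw [add_pow_of_mul_self_eq_zero hE, map_add, coeff_divisiblePart_pow, if_neg hr,
          zero_add, mul_assoc, ← nsmul_eq_mul, map_nsmul, nsmul_eq_mul]
    _ = _ := by
        rw [coeff_divisiblePart_pow_mul f hp.ne_zero hr]
        push_cast
        rfl
end

section
/- (Lucas' theorem for extended binomial coefficients) Let p be a prime and f : ℕ → ℕ. Let n = ∑_{i=0}^{t} n_i p^i and k = ∑_{j=0}^{r} k_j p^j with 0 ≤ n_i, k_j < p (base-p digit expansions). Then binom(k,n)_f ≡ ∑ ∏_{i=0}^{r} binom(k_i, s_i)_f (mod p), where the sum is over all (r+1)-tuples (s₀,…,s_r) of nonnegative integers satisfying s₀ + s₁·p + ⋯ + s_r·p^r = n. -/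
/-!
`binom(k,n)_f` is the `n`-th coefficient of `F ^ k`, where `F = ∑ f(m) X^m`. Over `𝔽_p` the
Frobenius gives `F ^ (p ^ j) = F(X ^ (p ^ j))`, so `k = ∑ k_j p^j` factors `F ^ k` as
`∏_j F^{k_j}(X ^ (p ^ j))`, and reading off the `n`-th coefficient of this product gives the sum
over `s₀ + s₁ p + ⋯ + s_r p^r = n`.
-/

open Finset PowerSeries

theorem Finset.sum_finsuppAntidiag_eq_sum_piAntidiag {ι μ M : Type*} [DecidableEq ι]
    [AddCommMonoid μ] [HasAntidiagonal μ] [DecidableEq μ] [AddCommMonoid M]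
    (s : Finset ι) (n : μ) (g : (ι → μ) → M) :
    ∑ l ∈ finsuppAntidiag s n, g l = ∑ l ∈ piAntidiag s n, g l := by
  rw [finsuppAntidiag, sum_map]
  exact sum_attach (piAntidiag s n) g

namespace PowerSeries

theorem coeff_prod_eq_sum_piAntidiag {R ι : Type*} [CommSemiring R] [Fintype ι] [DecidableEq ι]
    (φ : ι → R⟦X⟧) (n : ℕ) :
    coeff n (∏ i, φ i) = ∑ s ∈ piAntidiag univ n, ∏ i, coeff (s i) (φ i) := by
  rw [coeff_prod]
  exact sum_finsuppAntidiag_eq_sum_piAntidiag univ n fun s ↦ ∏ i, coeff (s i) (φ i)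

theorem coeff_prod_expand {R ι : Type*} [CommRing R] [Fintype ι] [DecidableEq ι]
    (d : ι → ℕ) (hd : ∀ i, d i ≠ 0) (φ : ι → R⟦X⟧) (n : ℕ) :
    coeff n (∏ i, expand (d i) (hd i) (φ i)) =
      ∑ s ∈ (Fintype.piFinset fun _ ↦ range (n + 1)).filter (fun s ↦ ∑ i, s i * d i = n),
        ∏ i, coeff (s i) (φ i) := by
  set T := (Fintype.piFinset fun _ : ι ↦ range (n + 1)).filter (fun s ↦ ∑ i, s i * d i = n)
  set scale : (ι → ℕ) → ι → ℕ := fun s i ↦ d i * s i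
  have scale_injective : Function.Injective scale := fun s s' h ↦ funext fun i ↦
    Nat.eq_of_mul_eq_mul_left (Nat.pos_of_ne_zero (hd i)) (congrFun h i)
  have image_subset : T.image scale ⊆ piAntidiag univ n := by
    simp only [subset_iff, mem_image, mem_piAntidiag, T, mem_filter]
    rintro _ ⟨s, ⟨-, hs⟩, rfl⟩
    simp [scale, ← hs, mul_comm]
  have mem_image_of_dvd {l : ι → ℕ} (hl : l ∈ piAntidiag univ n) (hdvd : ∀ i, d i ∣ l i) :
      l ∈ T.image scale := by
    rw [mem_piAntidiag] at hl
    have hle (i : ι) : l i ≤ n := hl.1 ▸ single_le_sum (fun _ _ ↦ Nat.zero_le _) (mem_univ i)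
    refine mem_image.2 ⟨fun i ↦ l i / d i, ?_, funext fun i ↦ Nat.mul_div_cancel' (hdvd i)⟩
    simp only [T, mem_filter, Fintype.mem_piFinset, mem_range, Nat.div_mul_cancel (hdvd _), hl.1,
      and_true]
    exact fun i ↦ Nat.lt_succ_of_le ((Nat.div_le_self _ _).trans (hle i))
  rw [coeff_prod_eq_sum_piAntidiag, ← sum_subset image_subset, sum_image scale_injective.injOn]
  · simp [scale, coeff_expand_mul]
  · intro l hl hl_notMem
    by_contra hne
    refine hl_notMem (mem_image_of_dvd hl fun i ↦ ?_)
    by_contra hndvd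
    exact hne (prod_eq_zero (mem_univ i) (coeff_expand_of_not_dvd _ _ _ hndvd))

theorem zmod_pow_pow_eq_expand {p : ℕ} [Fact p.Prime] (φ : (ZMod p)⟦X⟧) (j : ℕ) :
    φ ^ p ^ j = expand (p ^ j) (pow_ne_zero j (Fact.out : p.Prime).ne_zero) φ := by
  rw [← MvPowerSeries.map_iterateFrobenius_expand p (Fact.out : p.Prime).ne_zero φ j,
    Subsingleton.elim (iterateFrobenius (ZMod p) p j) (RingHom.id _), MvPowerSeries.map_id]
  rfl

end PowerSeries

theorem coeff_mk_pow_eq_extBinom {R : Type*} [CommSemiring R] (f : ℕ → ℕ) (k n : ℕ) :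
    coeff n (mk (fun m ↦ (f m : R)) ^ k) = extBinom f k n := by
  rw [← Fin.prod_const, coeff_prod_eq_sum_piAntidiag, piAntidiag_univ_fin_eq_antidiagonalTuple,
    extBinom]
  simp

theorem extBinom_lucas_general (p : ℕ) (hp : p.Prime) (f : ℕ → ℕ) (r : ℕ)
    (kd : Fin (r + 1) → ℕ)
    (n k : ℕ)
    (hk : k = ∑ j : Fin (r + 1), kd j * p ^ (j : ℕ)) :
    extBinom f k n ≡
      ∑ s ∈ (Fintype.piFinset fun _ : Fin (r + 1) => Finset.range (n + 1)).filter
          (fun s => ∑ i : Fin (r + 1), s i * p ^ (i : ℕ) = n),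
        ∏ i, extBinom f (kd i) (s i) [MOD p] := by
  have : Fact p.Prime := ⟨hp⟩
  set F : (ZMod p)⟦X⟧ := mk fun m ↦ (f m : ZMod p)
  have factor : F ^ k =
      ∏ j : Fin (r + 1), expand (p ^ (j : ℕ)) (pow_ne_zero _ hp.ne_zero) (F ^ kd j) := by
    rw [hk, ← prod_pow_eq_pow_sum]
    refine prod_congr rfl fun j _ ↦ ?_
    rw [mul_comm, pow_mul, zmod_pow_pow_eq_expand, map_pow]
  rw [← ZMod.natCast_eq_natCast_iff, ← coeff_mk_pow_eq_extBinom, factor, coeff_prod_expand]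
  push_cast
  simp only [F, coeff_mk_pow_eq_extBinom]

theorem extBinom_lucas (p : ℕ) (hp : p.Prime) (f : ℕ → ℕ) (t r : ℕ)
    (nd : Fin (t + 1) → ℕ) (kd : Fin (r + 1) → ℕ)
    (hnd : ∀ i, nd i < p) (hkd : ∀ j, kd j < p)
    (n k : ℕ)
    (hn : n = ∑ i : Fin (t + 1), nd i * p ^ (i : ℕ)) (hk : k = ∑ j : Fin (r + 1), kd j * p ^ (j : ℕ)) :
    extBinom f k n ≡
      ∑ s ∈ (Fintype.piFinset fun _ : Fin (r + 1) => Finset.range (n + 1)).filter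
          (fun s => ∑ i : Fin (r + 1), s i * p ^ (i : ℕ) = n),
        ∏ i, extBinom f (kd i) (s i) [MOD p] :=
  extBinom_lucas_general p hp f r kd n k hk
end
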